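/- Let r : ℝⁿ → ℝⁿ be differentiable at u, and suppose the Jacobian K = Dr(u) has a known sparsity structure given by a set S ⊆ Fin n × Fin n such that K i j = 0 whenever (i,j) ∉ S. Let c : Fin n → Fin m be a coloring of the columns such that any two columns j₁ ≠ j₂ with c j₁ = c j₂ never have nonzero entries in the same row (i.e., for all i, (i,j₁) ∈ S and (i,j₂) ∈ S implies j₁ = j₂). For each color k, let e_k ∈ ℝⁿ be the seed vector with (e_k) j = 1 if c j = k and 0 otherwise. Then every entry of K can be recovered from the m Jacobian-vector products: for all (i,j) ∈ S, K i j = (K e_{c j}) i. -/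

import Mathlib

theorem Matrix.mulVec_apply_eq_of_forall_ne {R ι κ : Type*} [NonAssocSemiring R] [Fintype κ]
    (K : Matrix ι κ R) (v : κ → R) {i : ι} {j : κ} (hv : v j = 1)
    (hvanish : ∀ j', j' ≠ j → K i j' = 0 ∨ v j' = 0) :
    K.mulVec v i = K i j := by
  rw [Matrix.mulVec, dotProduct, Finset.sum_eq_single_of_mem j (Finset.mem_univ j), hv, mul_one]
  intro j' _ hne
  rcases hvanish j' hne with hK | hv'
  · rw [hK, zero_mul]
  · rw [hv', mul_zero]

theorem sparse_jacobian_recovery_general {n m : ℕ}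
    (K : Matrix (Fin n) (Fin n) ℝ)
    (S : Set (Fin n × Fin n))
    (hS : ∀ i j, (i, j) ∉ S → K i j = 0)
    (c : Fin n → Fin m)
    (hc : ∀ i j₁ j₂, (i, j₁) ∈ S → (i, j₂) ∈ S → c j₁ = c j₂ → j₁ = j₂)
    (e : Fin m → Fin n → ℝ)
    (he : ∀ k j, e k j = if c j = k then 1 else 0) :
    ∀ i j, (i, j) ∈ S → K i j = K.mulVec (e (c j)) i := by
  intro i j hij
  refine (K.mulVec_apply_eq_of_forall_ne _ (by simp [he]) fun j' hne => ?_).symm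
  by_cases hmem : (i, j') ∈ S
  · exact .inr <| by rw [he, if_neg fun hcol => hne (hc i j' j hmem hij hcol)]
  · exact .inl (hS i j' hmem)

theorem sparse_jacobian_recovery {n m : ℕ}
    (r : (Fin n → ℝ) → (Fin n → ℝ)) (u : Fin n → ℝ)
    (hr : DifferentiableAt ℝ r u)
    (K : Matrix (Fin n) (Fin n) ℝ)
    (hK : ∀ i j, K i j = fderiv ℝ r u (Pi.single j 1) i)
    (S : Set (Fin n × Fin n))
    (hS : ∀ i j, (i, j) ∉ S → K i j = 0)
    (c : Fin n → Fin m)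
    (hc : ∀ i j₁ j₂, (i, j₁) ∈ S → (i, j₂) ∈ S → c j₁ = c j₂ → j₁ = j₂)
    (e : Fin m → Fin n → ℝ)
    (he : ∀ k j, e k j = if c j = k then 1 else 0) :
    ∀ i j, (i, j) ∈ S → K i j = K.mulVec (e (c j)) i :=
  sparse_jacobian_recovery_general K S hS c hc e he
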